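/- Every ideal of a commutative ring R that is maximal among weakly annihilated ideals of R (ordered by inclusion) is a prime ideal. -/

import Mathlib

/-!
If `x * y ∈ I` with `y ∉ I`, the colon ideal `(I : y)` contains `I` and `x`, is proper, and is
again weakly annihilated (a witness `c` for `a * y, b * y` relative to `I` yields the witness
`c * y` for `a, b` relative to `(I : y)`). Maximality forces `(I : y) = I`, so `x ∈ I`.
-/

/-- An ideal `I` of a commutative ring is weakly annihilated if for each `a ∈ I` and
`b ∉ I` there exists `c` with `c * a = 0` but `c * b ≠ 0`. -/
def WeaklyAnnihilated {R : Type*} [CommRing R] (I : Ideal R) : Prop :=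
  ∀ a ∈ I, ∀ b ∉ I, ∃ c : R, c * a = 0 ∧ c * b ≠ 0

open Submodule

theorem WeaklyAnnihilated.colon_singleton {R : Type*} [CommRing R] {I : Ideal R}
    (hI : WeaklyAnnihilated I) (y : R) : WeaklyAnnihilated (I.colon {y}) := by
  intro a ha b hb
  rw [mem_colon_singleton, smul_eq_mul] at ha hb
  obtain ⟨c, hca, hcb⟩ := hI _ ha _ hb
  exact ⟨c * y, by linear_combination hca, fun h ↦ hcb (by linear_combination h)⟩

theorem Ideal.isPrime_of_colon_singleton_eq {R : Type*} [CommRing R] {I : Ideal R}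
    (hI : I ≠ ⊤) (h : ∀ y ∉ I, I.colon {y} = I) : I.IsPrime :=
  ⟨hI, fun {_ y} hxy ↦ or_iff_not_imp_right.2 fun hy ↦ h y hy ▸ mem_colon_singleton.2 hxy⟩

theorem stmt1 {R : Type*} [CommRing R] (I : Ideal R)
    (hI : WeaklyAnnihilated I) (hproper : I ≠ ⊤)
    (hmax : ∀ J : Ideal R, WeaklyAnnihilated J → J ≠ ⊤ → I ≤ J → J = I) :
    I.IsPrime :=
  Ideal.isPrime_of_colon_singleton_eq hproper fun y hy ↦
    hmax _ (hI.colon_singleton y) (by simpa using hy) Ideal.le_colon
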